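/- arXiv:1602.02748 — 12 statements merged into one kernel-verified Lean document; each statement's English description precedes it below -/
import Mathlib

section
/- Let A and B be bounded linear operators on a complex Hilbert space H such that A and AB are normal. If A*AB = BA*A, then BA is normal. -/
/-!
Write `p = a⋆a = aa⋆`. As `p` commutes with `b` and `b⋆`, and `b⋆pb = (ab)⋆(ab) = (ab)(ab)⋆`,
multiplying `(ba)⋆(ba) = a⋆(b⋆ba)` and `(ba)(ba)⋆ = pbb⋆ = a⋆(abb⋆)` by `p` on the left gives
`p²bb⋆` in both cases. In a C⋆-ring `p` is injective on the range of `a⋆`, so the two agree.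
-/

open ContinuousLinearMap
open scoped InnerProductSpace

variable {H : Type*} [NormedAddCommGroup H] [InnerProductSpace ℂ H] [CompleteSpace H]

namespace CStarRing

variable {E : Type*} [NonUnitalNormedRing E] [StarRing E] [CStarRing E]

theorem star_mul_eq_of_star_mul_self_mul_star_mul_eq {a x y : E}
    (h : star a * a * (star a * x) = star a * a * (star a * y)) : star a * x = star a * y := by
  have hw : star a * a * (star a * (x - y)) = 0 := by rw [mul_sub, mul_sub, h, sub_self]
  have haw : a * (star a * (x - y)) = 0 := by
    rw [← star_mul_self_eq_zero_iff, star_mul, mul_assoc, ← mul_assoc (star a), hw, mul_zero]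
  rw [← sub_eq_zero, ← mul_sub, ← star_mul_self_eq_zero_iff, star_mul, star_star, mul_assoc, haw,
    mul_zero]

theorem isStarNormal_mul_swap {a b : E} [ha : IsStarNormal a] [hab : IsStarNormal (a * b)]
    (hc : Commute (star a * a) b) : IsStarNormal (b * a) := by
  obtain ⟨p, hp⟩ : ∃ p, star a * a = p := ⟨_, rfl⟩
  have hp' : a * star a = p := ha.star_comm_self.eq ▸ hp
  rw [hp] at hc
  have hpa : p * star a = star a * p := by rw [← hp, mul_assoc, hp', hp]
  have hpb : Commute p (star b) := by
    have hps : star p = p := by rw [← hp, star_mul, star_star]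
    exact hps ▸ hc.star_star
  have hab' : star b * star a * (a * b) = a * b * (star b * star a) := by
    simpa only [star_mul] using hab.star_comm_self.eq
  have hright : b * a * star (b * a) = star a * (a * (b * star b)) :=
    calc b * a * star (b * a) = b * (a * star a) * star b := by simp only [star_mul, mul_assoc]
      _ = p * (b * star b) := by rw [hp', ← hc.eq, mul_assoc]
      _ = star a * (a * (b * star b)) := by rw [← hp, mul_assoc]
  have hleft : p * (star a * (star b * b * a)) = p * (star a * (a * (b * star b))) :=
    calc p * (star a * (star b * b * a))
        = p * star a * (star b * b) * a := by simp only [mul_assoc]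
      _ = star a * (p * star b) * b * a := by rw [hpa]; simp only [mul_assoc]
      _ = star a * (star b * star a * (a * b)) * a := by
        rw [hpb.eq, ← hp]; simp only [mul_assoc]
      _ = p * (b * star b) * p := by rw [hab', ← hp]; simp only [mul_assoc]
      _ = p * (p * (b * star b)) := by rw [mul_assoc, ← (hc.mul_right hpb).eq]
      _ = p * (star a * (a * (b * star b))) := by rw [← hp]; simp only [mul_assoc]
  refine ⟨?_⟩
  rw [commute_iff_eq, hright]
  calc star (b * a) * (b * a) = star a * (star b * b * a) := by simp only [star_mul, mul_assoc]
    _ = star a * (a * (b * star b)) :=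
      star_mul_eq_of_star_mul_self_mul_star_mul_eq (hp ▸ hleft)

end CStarRing

/-- If A and AB are normal and A*AB = BA*A, then BA is normal. -/
theorem stmt0 (A B : H →L[ℂ] H)
    (hA : adjoint A * A = A * adjoint A)
    (hAB : adjoint (A * B) * (A * B) = (A * B) * adjoint (A * B))
    (hcomm : adjoint A * A * B = B * (adjoint A * A)) :
    adjoint (B * A) * (B * A) = (B * A) * adjoint (B * A) := by
  have : IsStarNormal A := ⟨hA⟩
  have : IsStarNormal (A * B) := ⟨hAB⟩
  exact (CStarRing.isStarNormal_mul_swap hcomm).star_comm_self.eq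
end

section
/- Let A = U|A| be a bounded operator on a complex Hilbert space with U unitary and |A| = (A*A)^{1/2}, and let B be a bounded operator such that |A|BU = BU|A|. If UB is hyponormal, then AB is hyponormal. -/
open ContinuousLinearMap
open scoped InnerProductSpace

variable {H : Type*} [NormedAddCommGroup H] [InnerProductSpace ℂ H] [CompleteSpace H]

/-- A = U|A|, U unitary, |A|BU = BU|A|, UB hyponormal ⟹ AB hyponormal. -/
theorem stmt2 (A B U P : H →L[ℂ] H)
    (hU : U ∈ unitary (H →L[ℂ] H))
    (hP : 0 ≤ P) (hP2 : P * P = adjoint A * A) (hpolar : A = U * P)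
    (hcomm : P * (B * U) = (B * U) * P)
    (hUB : ∀ x : H, ‖adjoint (U * B) x‖ ≤ ‖(U * B) x‖) :
    ∀ x : H, ‖adjoint (A * B) x‖ ≤ ‖(A * B) x‖ := by
  intro x
  obtain ⟨hU1', hU2'⟩ := Unitary.mem_iff.mp hU
  have hU1 : adjoint U * U = 1 := by rwa [star_eq_adjoint] at hU1'
  have hU2 : U * adjoint U = 1 := by rwa [star_eq_adjoint] at hU2'
  have hPsa : adjoint P = P := ((nonneg_iff_isPositive P).mp hP).isSelfAdjoint
  have hnormU : ∀ v : H, ‖U v‖ = ‖v‖ := by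
    intro v
    have h1 : ⟪U v, U v⟫_ℂ = ⟪v, v⟫_ℂ := by
      rw [← adjoint_inner_left]
      have : adjoint U (U v) = v := by
        have := congrArg (fun T : H →L[ℂ] H => T v) hU1
        simpa using this
      rw [this]
    rw [inner_self_eq_norm_sq_to_K, inner_self_eq_norm_sq_to_K] at h1
    have h2 : (‖U v‖ : ℝ) ^ 2 = (‖v‖ : ℝ) ^ 2 := by exact_mod_cast h1
    nlinarith [norm_nonneg (U v), norm_nonneg v]
  have hUUstar : ∀ v : H, U (adjoint U v) = v := by
    intro v
    have := congrArg (fun T : H →L[ℂ] H => T v) hU2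
    simpa using this
  have hUstarU : ∀ v : H, adjoint U (U v) = v := by
    intro v
    have := congrArg (fun T : H →L[ℂ] H => T v) hU1
    simpa using this
  set y := adjoint U x with hy
  set z := P y with hz
  -- key inequality from hyponormality of UB at U z
  have key := hUB (U z)
  have hL : adjoint (U * B) (U z) = adjoint B z := by
    simp [adjoint_comp, mul_def, hUstarU]
  have hR : ‖(U * B) (U z)‖ = ‖B (U z)‖ := by
    simp [mul_def, hnormU]
  rw [hL, hR] at key
  -- LHS : ‖(AB)* x‖ = ‖B* z‖
  have hLHS : adjoint (A * B) x = adjoint B z := by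
    simp [hpolar, adjoint_comp, hPsa, mul_def, hz, hy]
  -- commutation: B (U z) = P (B x)
  have hBUz : B (U z) = P (B x) := by
    have := congrArg (fun T : H →L[ℂ] H => T y) hcomm.symm
    simp only [mul_def, comp_apply] at this
    -- this : B (U (P y)) = P (B (U y))
    rw [hz, this, hy, hUUstar]
  -- RHS : ‖(AB) x‖ = ‖P (B x)‖
  have hRHS : ‖(A * B) x‖ = ‖P (B x)‖ := by
    simp [hpolar, mul_def, hnormU]
  rw [hLHS, hRHS, ← hBUz]
  exact key
end

section
/- Let A = U|A| be a bounded operator on a complex Hilbert space with U unitary, and let B be a bounded operator such that |A|BU = BU|A|. If BU is hyponormal, then BA is hyponormal. -/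
open ContinuousLinearMap
open scoped InnerProductSpace

variable {H : Type*} [NormedAddCommGroup H] [InnerProductSpace ℂ H] [CompleteSpace H]

/-- A = U|A|, U unitary, |A|BU = BU|A|, BU hyponormal ⟹ BA hyponormal. -/
theorem stmt3 (A B U P : H →L[ℂ] H)
    (hU : U ∈ unitary (H →L[ℂ] H))
    (hP : 0 ≤ P) (hP2 : P * P = adjoint A * A) (hpolar : A = U * P)
    (hcomm : P * (B * U) = (B * U) * P)
    (hBU : ∀ x : H, ‖adjoint (B * U) x‖ ≤ ‖(B * U) x‖) :
    ∀ x : H, ‖adjoint (B * A) x‖ ≤ ‖(B * A) x‖ := by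
  intro x
  have hPsa : adjoint P = P := by
    have := IsSelfAdjoint.of_nonneg hP
    rwa [isSelfAdjoint_iff, star_eq_adjoint] at this
  -- P commutes with adjoint (B*U)
  have hcomm' : P * adjoint (B * U) = adjoint (B * U) * P := by
    have hadj : adjoint (B * U) = adjoint U * adjoint B := by
      rw [← star_eq_adjoint, star_mul, star_eq_adjoint, star_eq_adjoint]
    have h := congrArg star hcomm
    simp only [star_mul, star_eq_adjoint, hPsa, mul_assoc] at h
    rw [hadj, mul_assoc, h]
  have hBA : B * A = B * U * P := by rw [hpolar, mul_assoc]
  have h1 : adjoint (B * A) = P * adjoint (B * U) := by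
    rw [hBA, ← star_eq_adjoint, star_mul, star_eq_adjoint, star_eq_adjoint, hPsa]
  calc ‖adjoint (B * A) x‖ = ‖adjoint (B * U) (P x)‖ := by
        rw [h1, hcomm']; rfl
    _ ≤ ‖(B * U) (P x)‖ := hBU _
    _ = ‖(B * A) x‖ := by rw [hBA]; rfl
end

section
/- Let A = U|A| be a bounded operator on a complex Hilbert space with U unitary, and let B be bounded with |A|BU = BU|A|. If BU is quasihyponormal, then BA is quasihyponormal. -/
open ContinuousLinearMap
open scoped InnerProductSpace

variable {H : Type*} [NormedAddCommGroup H] [InnerProductSpace ℂ H] [CompleteSpace H]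

/-- A = U|A|, U unitary, |A|BU = BU|A|, BU quasihyponormal ⟹ BA quasihyponormal. -/
theorem stmt4 (A B U P : H →L[ℂ] H)
    (hU : U ∈ unitary (H →L[ℂ] H))
    (hP : 0 ≤ P) (hP2 : P * P = adjoint A * A) (hpolar : A = U * P)
    (hcomm : P * (B * U) = (B * U) * P)
    (hBU : ∀ x : H, ‖(adjoint (B * U) * (B * U)) x‖ ≤ ‖((B * U) ^ 2) x‖) :
    ∀ x : H, ‖(adjoint (B * A) * (B * A)) x‖ ≤ ‖((B * A) ^ 2) x‖ := by
  intro x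
  set T := B * U with hT
  have hPsa : adjoint P = P :=
    (((nonneg_iff_isPositive P).mp hP).isSelfAdjoint)
  have hA : B * A = T * P := by rw [hpolar, hT, mul_assoc]
  have hc : P * T = T * P := hcomm
  have hc' : P * adjoint T = adjoint T * P := by
    have h := congrArg star hc
    simp only [star_mul, star_eq_adjoint, hPsa] at h
    exact h.symm
  have key1 : adjoint (B * A) * (B * A) = adjoint T * T * (P * P) := by
    rw [hA, ← star_eq_adjoint, star_mul, star_eq_adjoint, star_eq_adjoint, hPsa]
    calc P * adjoint T * (T * P) = adjoint T * P * T * P := by rw [hc']; noncomm_ring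
      _ = adjoint T * (P * T) * P := by rw [mul_assoc (adjoint T)]
      _ = adjoint T * (T * P) * P := by rw [hc]
      _ = adjoint T * T * (P * P) := by noncomm_ring
  have key2 : (B * A) ^ 2 = T ^ 2 * (P * P) := by
    rw [hA]
    calc (T * P) ^ 2 = T * (P * T) * P := by noncomm_ring
      _ = T * (T * P) * P := by rw [hc]
      _ = T ^ 2 * (P * P) := by noncomm_ring
  rw [key1, key2]
  simpa using hBU ((P * P) x)
end

section
/- Let A and B be hyponormal bounded operators on a complex Hilbert space such that BA* = A*B. Then for every positive integer k and all x, ‖(AB)*(AB)^k x‖ ≤ ‖(AB)^{k+1} x‖; that is, AB is k-quasihyponormal. -/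
open ContinuousLinearMap
open scoped InnerProductSpace

variable {H : Type*} [NormedAddCommGroup H] [InnerProductSpace ℂ H] [CompleteSpace H]

namespace ContinuousLinearMap

section Hyponormal

variable {𝕜 E : Type*} [RCLike 𝕜] [NormedAddCommGroup E] [InnerProductSpace 𝕜 E] [CompleteSpace E]

def IsHyponormal (T : E →L[𝕜] E) : Prop :=
  ∀ x, ‖adjoint T x‖ ≤ ‖T x‖

def IsQuasihyponormal (k : ℕ) (T : E →L[𝕜] E) : Prop :=
  ∀ x, ‖(adjoint T * T ^ k) x‖ ≤ ‖(T ^ (k + 1)) x‖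

theorem adjoint_mul (A B : E →L[𝕜] E) : adjoint (A * B) = adjoint B * adjoint A :=
  adjoint_comp A B

theorem IsHyponormal.mul {A B : E →L[𝕜] E} (hA : A.IsHyponormal) (hB : B.IsHyponormal)
    (hcomm : B * adjoint A = adjoint A * B) : (A * B).IsHyponormal := fun y =>
  calc ‖adjoint (A * B) y‖ = ‖adjoint B (adjoint A y)‖ := by rw [adjoint_mul]; rfl
    _ ≤ ‖B (adjoint A y)‖ := hB _
    _ = ‖adjoint A (B y)‖ := by rw [← mul_apply_eq_comp, hcomm, mul_apply_eq_comp]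
    _ ≤ ‖A (B y)‖ := hA _

theorem IsHyponormal.isQuasihyponormal {T : E →L[𝕜] E} (hT : T.IsHyponormal) (k : ℕ) :
    T.IsQuasihyponormal k := fun x => by
  rw [mul_apply_eq_comp, pow_succ', mul_apply_eq_comp]
  exact hT _

end Hyponormal

end ContinuousLinearMap

/-- A, B hyponormal, BA* = A*B ⟹ AB is k-quasihyponormal for every positive integer k. -/
theorem stmt5 (A B : H →L[ℂ] H)
    (hA : ∀ x : H, ‖adjoint A x‖ ≤ ‖A x‖)
    (hB : ∀ x : H, ‖adjoint B x‖ ≤ ‖B x‖)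
    (hcomm : B * adjoint A = adjoint A * B) :
    ∀ (k : ℕ), 0 < k → ∀ x : H,
      ‖(adjoint (A * B) * (A * B) ^ k) x‖ ≤ ‖((A * B) ^ (k + 1)) x‖ := fun k _ =>
  (IsHyponormal.mul hA hB hcomm).isQuasihyponormal k
end

section
/- Let A and B be k-quasihyponormal bounded operators on a complex Hilbert space, for a positive integer k. If A*A^kB = BA*A^k, A^kB^k = (AB)^k and A^{k+1}B^{k+1} = (AB)^{k+1}, then AB is k-quasihyponormal. -/
open ContinuousLinearMap
open scoped InnerProductSpace

variable {H : Type*} [NormedAddCommGroup H] [InnerProductSpace ℂ H] [CompleteSpace H]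

/-- A, B k-quasihyponormal, A*A^kB = BA*A^k, A^jB^j = (AB)^j for j = k, k+1 ⟹
AB is k-quasihyponormal. -/
theorem stmt6 (A B : H →L[ℂ] H) (k : ℕ) (hk : 0 < k)
    (hA : ∀ x : H, ‖(adjoint A * A ^ k) x‖ ≤ ‖(A ^ (k + 1)) x‖)
    (hB : ∀ x : H, ‖(adjoint B * B ^ k) x‖ ≤ ‖(B ^ (k + 1)) x‖)
    (hcomm : adjoint A * A ^ k * B = B * (adjoint A * A ^ k))
    (hk1 : A ^ k * B ^ k = (A * B) ^ k)
    (hk2 : A ^ (k + 1) * B ^ (k + 1) = (A * B) ^ (k + 1)) :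
    ∀ x : H, ‖(adjoint (A * B) * (A * B) ^ k) x‖ ≤ ‖((A * B) ^ (k + 1)) x‖ := by
  intro x
  have hc : Commute (adjoint A * A ^ k) B := hcomm
  have hck : ∀ n : ℕ, adjoint A * A ^ k * B ^ n = B ^ n * (adjoint A * A ^ k) :=
    fun n => (hc.pow_right n)
  have e1 : adjoint (A * B) * (A * B) ^ k
      = adjoint B * B ^ k * (adjoint A * A ^ k) := by
    rw [show adjoint (A * B) = adjoint B * adjoint A from adjoint_comp A B, ← hk1, mul_assoc, ← mul_assoc (adjoint A), hck k,
      mul_assoc, ← mul_assoc]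
  calc ‖(adjoint (A * B) * (A * B) ^ k) x‖
      = ‖(adjoint B * B ^ k) ((adjoint A * A ^ k) x)‖ := by rw [e1]; rfl
    _ ≤ ‖(B ^ (k + 1)) ((adjoint A * A ^ k) x)‖ := hB _
    _ = ‖(adjoint A * A ^ k) ((B ^ (k + 1)) x)‖ := by
        rw [← comp_apply, ← comp_apply, ← mul_def, ← mul_def, ← hck (k + 1)]
    _ ≤ ‖(A ^ (k + 1)) ((B ^ (k + 1)) x)‖ := hA _
    _ = ‖((A * B) ^ (k + 1)) x‖ := by
        rw [← comp_apply, ← mul_def, hk2]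
end

section
/- Let A and B be k-quasihyponormal bounded operators on a complex Hilbert space, for a positive integer k. If B*B^kA = AB*B^k, B^kA^k = (BA)^k and B^{k+1}A^{k+1} = (BA)^{k+1}, then BA is k-quasihyponormal. -/
open ContinuousLinearMap
open scoped InnerProductSpace

variable {H : Type*} [NormedAddCommGroup H] [InnerProductSpace ℂ H] [CompleteSpace H]

/-- A, B k-quasihyponormal, B*B^kA = AB*B^k, B^jA^j = (BA)^j for j = k, k+1 ⟹
BA is k-quasihyponormal. -/
theorem stmt7 (A B : H →L[ℂ] H) (k : ℕ) (hk : 0 < k)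
    (hA : ∀ x : H, ‖(adjoint A * A ^ k) x‖ ≤ ‖(A ^ (k + 1)) x‖)
    (hB : ∀ x : H, ‖(adjoint B * B ^ k) x‖ ≤ ‖(B ^ (k + 1)) x‖)
    (hcomm : adjoint B * B ^ k * A = A * (adjoint B * B ^ k))
    (hk1 : B ^ k * A ^ k = (B * A) ^ k)
    (hk2 : B ^ (k + 1) * A ^ (k + 1) = (B * A) ^ (k + 1)) :
    ∀ x : H, ‖(adjoint (B * A) * (B * A) ^ k) x‖ ≤ ‖((B * A) ^ (k + 1)) x‖ := by
  set S := adjoint B * B ^ k with hS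
  have hcommn : ∀ n : ℕ, S * A ^ n = A ^ n * S := by
    intro n
    induction n with
    | zero => simp
    | succ n ih =>
      rw [pow_succ, ← mul_assoc, ih, mul_assoc, hcomm, ← mul_assoc]
  have hadj : adjoint (B * A) = adjoint A * adjoint B := adjoint_comp B A
  have key : adjoint (B * A) * (B * A) ^ k = (adjoint A * A ^ k) * S := by
    rw [← hk1, hadj, mul_assoc, ← mul_assoc (adjoint B), ← hS, hcommn k, ← mul_assoc]
  intro x
  calc ‖(adjoint (B * A) * (B * A) ^ k) x‖
      = ‖(adjoint A * A ^ k) (S x)‖ := by rw [key]; rfl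
    _ ≤ ‖(A ^ (k + 1)) (S x)‖ := hA (S x)
    _ = ‖S ((A ^ (k + 1)) x)‖ := by
        have : A ^ (k + 1) * S = S * A ^ (k + 1) := (hcommn (k + 1)).symm
        calc ‖(A ^ (k + 1)) (S x)‖ = ‖(A ^ (k + 1) * S) x‖ := rfl
          _ = ‖(S * A ^ (k + 1)) x‖ := by rw [this]
          _ = ‖S ((A ^ (k + 1)) x)‖ := rfl
    _ ≤ ‖(B ^ (k + 1)) ((A ^ (k + 1)) x)‖ := hB _
    _ = ‖((B * A) ^ (k + 1)) x‖ := by rw [← hk2]; rfl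
end

section
/- Let A and B be bounded operators on a complex Hilbert space such that A is normal, AB is quasinormal, and A*AB = BA*A. Then BA is quasinormal. -/
open ContinuousLinearMap
open scoped InnerProductSpace

variable {H : Type*} [NormedAddCommGroup H] [InnerProductSpace ℂ H] [CompleteSpace H]

/-- A normal, AB quasinormal, A*AB = BA*A ⟹ BA quasinormal. -/
theorem stmt8 (A B : H →L[ℂ] H)
    (hA : adjoint A * A = A * adjoint A)
    (hAB : (A * B) * (adjoint (A * B) * (A * B)) = (adjoint (A * B) * (A * B)) * (A * B))
    (hcomm : adjoint A * A * B = B * (adjoint A * A)) :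
    (B * A) * (adjoint (B * A) * (B * A)) = (adjoint (B * A) * (B * A)) * (B * A) := by
  have hadj : ∀ S T : H →L[ℂ] H, adjoint (S * T) = adjoint T * adjoint S := by
    intro S T
    rw [← star_eq_adjoint, ← star_eq_adjoint, ← star_eq_adjoint, star_mul]
  -- commutation of a'*a with b'
  have hcomm' : adjoint A * A * adjoint B = adjoint B * (adjoint A * A) := by
    have h := congrArg adjoint hcomm
    simp only [hadj, adjoint_adjoint] at h
    exact h.symm
  -- pointwise (right-assoc) commutation lemmas
  have c1 : ∀ X : H →L[ℂ] H, adjoint A * (A * X) = A * (adjoint A * X) := by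
    intro X; rw [← mul_assoc, hA, mul_assoc]
  have c2 : ∀ X : H →L[ℂ] H, adjoint A * (A * (B * X)) = B * (adjoint A * (A * X)) := by
    intro X; rw [← mul_assoc, ← mul_assoc, hcomm, mul_assoc, mul_assoc]
  have c2' : ∀ X : H →L[ℂ] H,
      adjoint A * (A * (adjoint B * X)) = adjoint B * (adjoint A * (A * X)) := by
    intro X; rw [← mul_assoc, ← mul_assoc, hcomm', mul_assoc, mul_assoc]
  -- quasinormality of AB, right-assoc, with a free tail
  have h2 := hAB
  rw [hadj] at h2
  have h2x : ∀ X : H →L[ℂ] H,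
      A * (B * (adjoint B * (adjoint A * (A * (B * X)))))
        = adjoint B * (adjoint A * (A * (B * (A * (B * X))))) := by
    intro X
    have h := congrArg (· * X) h2
    simp only [mul_assoc] at h
    exact h
  -- the defect operator D
  set X : H →L[ℂ] H := B * (adjoint B * (B * A)) with hX
  set Y : H →L[ℂ] H := adjoint B * (B * (A * (B * A))) with hY
  set D : H →L[ℂ] H := adjoint A * A * X - adjoint A * Y with hD
  -- P * D = 0
  have hPD : adjoint A * A * D = 0 := by
    rw [hD, mul_sub, sub_eq_zero, hX, hY]
    simp only [mul_assoc]
    conv_lhs => rw [c2 (adjoint B * (B * A)), c2' (B * A)]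
    conv_rhs => rw [← c1 (adjoint B * (B * (A * (B * A)))), c2' (B * (A * (B * A))),
      ← h2x A]
  -- A ∘ D = 0
  have hAD : ∀ v : H, A (D v) = 0 := by
    intro v
    have h : adjoint A (A (D v)) = 0 := by
      have h' : (adjoint A * A * D) v = (0 : H →L[ℂ] H) v := by rw [hPD]
      simpa [mul_apply] using h'
    have h0 : ⟪A (D v), A (D v)⟫_ℂ = 0 := by
      rw [← adjoint_inner_left, h, inner_zero_left]
    exact inner_self_eq_zero.mp h0
  -- D = 0
  have hD0 : D = 0 := by
    ext v
    rw [zero_apply]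
    have hv : D v = adjoint A (A (X v)) - adjoint A (Y v) := by
      rw [hD]; simp [mul_apply]
    have h0 : ⟪D v, D v⟫_ℂ = 0 := by
      calc ⟪D v, D v⟫_ℂ
          = ⟪D v, adjoint A (A (X v)) - adjoint A (Y v)⟫_ℂ := by rw [← hv]
        _ = ⟪D v, adjoint A (A (X v))⟫_ℂ - ⟪D v, adjoint A (Y v)⟫_ℂ := inner_sub_right _ _ _
        _ = ⟪A (D v), A (X v)⟫_ℂ - ⟪A (D v), Y v⟫_ℂ := by
            rw [adjoint_inner_right, adjoint_inner_right]
        _ = 0 := by rw [hAD v, inner_zero_left, inner_zero_left, sub_zero]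
    exact inner_self_eq_zero.mp h0
  -- conclude
  rw [← sub_eq_zero]
  have hform : (B * A) * (adjoint (B * A) * (B * A)) - (adjoint (B * A) * (B * A)) * (B * A)
      = D := by
    rw [hadj, hD, hX, hY]
    simp only [mul_assoc]
    rw [c2 (adjoint B * (B * A)), c1 (adjoint B * (B * A))]
  rw [hform]
  exact hD0
end

section
/- Let A = U|A| be the polar decomposition of a quasinormal bounded operator A (U a partial isometry), and let B be a bounded operator such that BU is quasinormal and |A|BU = BU|A|. Then BA is quasinormal. -/
open ContinuousLinearMap
open scoped InnerProductSpace

variable {H : Type*} [NormedAddCommGroup H] [InnerProductSpace ℂ H] [CompleteSpace H]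

theorem Commute.mul_star_mul_self_of_isSelfAdjoint {R : Type*} [Monoid R] [StarMul R] {T P : R}
    (hP : IsSelfAdjoint P) (hPT : Commute P T) (hT : Commute T (star T * T)) :
    Commute (T * P) (star (T * P) * (T * P)) := by
  have hPT' : Commute P (star T) := by
    simpa only [hP.star_eq] using commute_star_star.mpr hPT
  have hPP : Commute P (P * P) := (Commute.refl P).mul_right (Commute.refl P)
  have hP_TT : Commute P (star T * T) := hPT'.mul_right hPT
  have hT_PP : Commute T (P * P) := hPT.symm.mul_right hPT.symm
  have hnormal_form : star (T * P) * (T * P) = P * P * (star T * T) := by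
    rw [star_mul, hP.star_eq, mul_assoc, ← mul_assoc (star T), ← hP_TT.eq, mul_assoc]
  rw [hnormal_form]
  exact (hT_PP.mul_right hT).mul_left (hPP.mul_right hP_TT)

theorem stmt9_general (A B U P : H →L[ℂ] H)
    (hP : 0 ≤ P) (hpolar : A = U * P)
    (hBU : (B * U) * (adjoint (B * U) * (B * U)) = (adjoint (B * U) * (B * U)) * (B * U))
    (hcomm : P * (B * U) = (B * U) * P) :
    (B * A) * (adjoint (B * A) * (B * A)) = (adjoint (B * A) * (B * A)) * (B * A) := by
  have hBA : B * A = B * U * P := by rw [hpolar, mul_assoc]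
  simp only [hBA, ← star_eq_adjoint] at hBU ⊢
  exact Commute.mul_star_mul_self_of_isSelfAdjoint hP.isSelfAdjoint hcomm hBU

/-- A quasinormal with polar decomposition A = U|A| (U a partial isometry),
BU quasinormal and |A|BU = BU|A| ⟹ BA quasinormal. -/
theorem stmt9 (A B U P : H →L[ℂ] H)
    (hP : 0 ≤ P) (hP2 : P * P = adjoint A * A) (hpolar : A = U * P)
    (hUiso : ∀ x ∈ (LinearMap.ker (U : H →ₗ[ℂ] H))ᗮ, ‖U x‖ = ‖x‖)
    (hUker : LinearMap.ker (U : H →ₗ[ℂ] H) = LinearMap.ker (A : H →ₗ[ℂ] H))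
    (hA : A * (adjoint A * A) = (adjoint A * A) * A)
    (hBU : (B * U) * (adjoint (B * U) * (B * U)) = (adjoint (B * U) * (B * U)) * (B * U))
    (hcomm : P * (B * U) = (B * U) * P) :
    (B * A) * (adjoint (B * A) * (B * A)) = (adjoint (B * A) * (B * A)) * (B * A) :=
  stmt9_general A B U P hP hpolar hBU hcomm
end

section
/- Let A and B be bounded operators on a complex Hilbert space such that A is normal, AB is paranormal, and A*AB = BA*A. Then BA is paranormal. -/
/-!
Let `S = |A| = √(A*A)`. Then `‖S v‖ = ‖A v‖` for all `v`, and `S` commutes with `A` (as `A` is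
normal) and with `B` (as `S` is a function of `A*A`). From `(BA)ⁿ S = S (BA)ⁿ` and
`A (BA)ⁿ = (AB)ⁿ A` we get `‖(BA)ⁿ (S y)‖ = ‖(AB)ⁿ (A y)‖`, so paranormality of `AB` at `A y` is
paranormality of `BA` at `S y`. This plays the role of the unitary `U` of the polar decomposition.
The inequality is closed in `x`, so it holds on the closure of the range of `S`, which is
`(ker S)ᗮ`; since `ker S ≤ ker (BA)`, projecting `x` onto it changes neither `BA x` nor `(BA)² x`
and does not increase `‖x‖`.
-/

open ContinuousLinearMap
open scoped InnerProductSpace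

def IsParanormal {𝕜 E : Type*} [NormedField 𝕜] [SeminormedAddCommGroup E] [NormedSpace 𝕜 E]
    (T : E →L[𝕜] E) : Prop :=
  ∀ x, ‖T x‖ ^ 2 ≤ ‖(T ^ 2) x‖ * ‖x‖

section Normed

variable {𝕜 E : Type*} [NormedField 𝕜] [SeminormedAddCommGroup E] [NormedSpace 𝕜 E]

lemma isClosed_setOf_paranormal_ineq (T : E →L[𝕜] E) :
    IsClosed {x | ‖T x‖ ^ 2 ≤ ‖(T ^ 2) x‖ * ‖x‖} :=
  isClosed_le (by fun_prop) (by fun_prop)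

lemma norm_mul_pow_apply_eq {A B S : E →L[𝕜] E} (hSA : Commute S A) (hSB : Commute S B)
    (hnorm : ∀ v, ‖S v‖ = ‖A v‖) (n : ℕ) (y : E) :
    ‖((B * A) ^ n) (S y)‖ = ‖((A * B) ^ n) (A y)‖ := by
  have hS : (B * A) ^ n * S = S * (B * A) ^ n := ((hSB.mul_right hSA).pow_right n).eq.symm
  have hA : A * (B * A) ^ n = (A * B) ^ n * A :=
    (SemiconjBy.pow_right (mul_assoc A B A).symm n).eq
  calc ‖((B * A) ^ n) (S y)‖ = ‖S (((B * A) ^ n) y)‖ := by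
        rw [← mul_apply_eq_comp, hS, mul_apply_eq_comp]
    _ = ‖A (((B * A) ^ n) y)‖ := hnorm _
    _ = ‖((A * B) ^ n) (A y)‖ := by rw [← mul_apply_eq_comp, hA, mul_apply_eq_comp]

lemma IsParanormal.swap_mul_ineq_apply {A B S : E →L[𝕜] E} (hAB : IsParanormal (A * B))
    (hSA : Commute S A) (hSB : Commute S B) (hnorm : ∀ v, ‖S v‖ = ‖A v‖) (y : E) :
    ‖(B * A) (S y)‖ ^ 2 ≤ ‖((B * A) ^ 2) (S y)‖ * ‖S y‖ := by
  have h1 := norm_mul_pow_apply_eq hSA hSB hnorm 1 y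
  rw [pow_one, pow_one] at h1
  rw [h1, norm_mul_pow_apply_eq hSA hSB hnorm 2 y, hnorm y]
  exact hAB (A y)

end Normed

section InnerProduct

variable {𝕜 E : Type*} [RCLike 𝕜] [NormedAddCommGroup E] [InnerProductSpace 𝕜 E] [CompleteSpace E]

lemma norm_apply_eq_of_star_mul_self_eq {S T : E →L[𝕜] E} (h : star S * S = star T * T)
    (v : E) : ‖S v‖ = ‖T v‖ := by
  have hsq : ‖S v‖ ^ 2 = ‖T v‖ ^ 2 := by
    rw [apply_norm_sq_eq_inner_adjoint_left, apply_norm_sq_eq_inner_adjoint_left]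
    simp only [← star_eq_adjoint, ← mul_def, h]
  exact (pow_left_inj₀ (norm_nonneg _) (norm_nonneg _) two_ne_zero).mp hsq

lemma IsParanormal.of_forall_apply_range {S T : E →L[𝕜] E} (hS : IsStarNormal S)
    (hker : S.ker ≤ T.ker) (h : ∀ y, ‖T (S y)‖ ^ 2 ≤ ‖(T ^ 2) (S y)‖ * ‖S y‖) :
    IsParanormal T := by
  intro x
  set K := S.range.topologicalClosure
  set p := K.starProjection x
  have hp : ‖T p‖ ^ 2 ≤ ‖(T ^ 2) p‖ * ‖p‖ := by
    have hsub : closure (Set.range S) ⊆ {x | ‖T x‖ ^ 2 ≤ ‖(T ^ 2) x‖ * ‖x‖} :=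
      closure_minimal (by rintro _ ⟨y, rfl⟩; exact h y) (isClosed_setOf_paranormal_ineq T)
    exact hsub (K.starProjection_apply_mem x)
  have hxp : x - p ∈ S.ker := by
    have := K.sub_starProjection_mem_orthogonal x
    rwa [Submodule.orthogonal_closure, hS.orthogonal_range] at this
  have hTx : T x = T p := sub_eq_zero.mp (by simpa using hker hxp)
  have hT2x : (T ^ 2) x = (T ^ 2) p := by rw [sq, mul_apply_eq_comp, hTx, mul_apply_eq_comp]
  calc ‖T x‖ ^ 2 = ‖T p‖ ^ 2 := by rw [hTx]
    _ ≤ ‖(T ^ 2) p‖ * ‖p‖ := hp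
    _ ≤ ‖(T ^ 2) x‖ * ‖x‖ := by
      rw [hT2x]; gcongr; exact K.norm_starProjection_apply_le x

end InnerProduct

variable {H : Type*} [NormedAddCommGroup H] [InnerProductSpace ℂ H] [CompleteSpace H]

lemma norm_abs_apply (T : H →L[ℂ] H) (v : H) : ‖CFC.abs T v‖ = ‖T v‖ :=
  norm_apply_eq_of_star_mul_self_eq
    (by rw [(CFC.abs_nonneg T).isSelfAdjoint.star_eq, CFC.abs_mul_abs]) v

/-- A normal, AB paranormal, A*AB = BA*A ⟹ BA paranormal. -/
theorem stmt10 (A B : H →L[ℂ] H)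
    (hA : adjoint A * A = A * adjoint A)
    (hAB : ∀ x : H, ‖(A * B) x‖ ^ 2 ≤ ‖((A * B) ^ 2) x‖ * ‖x‖)
    (hcomm : adjoint A * A * B = B * (adjoint A * A)) :
    ∀ x : H, ‖(B * A) x‖ ^ 2 ≤ ‖((B * A) ^ 2) x‖ * ‖x‖ := by
  have hnormal : IsStarNormal A := ⟨by rw [star_eq_adjoint]; exact hA⟩
  set S := CFC.abs A
  have hSA : Commute S A := CFC.commute_abs_self A hnormal
  have hSB : Commute S B :=
    Commute.cfcₙ_nnreal (show Commute (star A * A) B by rw [star_eq_adjoint]; exact hcomm) _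
  have hker : S.ker ≤ (B * A).ker := fun v hv => by
    have hAv : A v = 0 := by rw [← norm_eq_zero, ← norm_abs_apply]; exact norm_eq_zero.mpr hv
    simp [LinearMap.mem_ker, hAv]
  exact IsParanormal.of_forall_apply_range (CFC.abs_nonneg A).isSelfAdjoint.isStarNormal hker
    (IsParanormal.swap_mul_ineq_apply hAB hSA hSB (norm_abs_apply A))
end

section
/- Let A and B be bounded operators on a complex Hilbert space such that A is normal, AB is (p,k)-quasihyponormal for some 0 < p ≤ 1 and positive integer k, and B(AA*) = (AA*)B. Then BA is (p,k)-quasihyponormal. -/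
/-!
Put `S = AB` and `T = BA`. Then `A T = S A`, and since `A` is normal and `B` commutes with `AA*`,
also `A T* = S* A`. Hence `A` intertwines `T*T, TT*` with `S*S, SS*`, therefore also their
`p`-th powers, and finally the defects `M = T*ᵏ ((T*T)ᵖ - (TT*)ᵖ) Tᵏ` and `N` (the same for `S`):
`A M = N A`. Thus `A M A* = N (AA*)` is a product of commuting positive operators, so it is
positive. As `k ≥ 1`, the self-adjoint `M` vanishes on `ker A`, so its quadratic form only sees
`(ker A)ᗮ = closure (range A*)`, where it is nonnegative because `A M A*` is positive.
-/

open ContinuousLinearMap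
open scoped InnerProductSpace

variable {H : Type*} [NormedAddCommGroup H] [InnerProductSpace ℂ H] [CompleteSpace H]

open Polynomial Filter Topology

theorem SemiconjBy.aeval {R A : Type*} [CommSemiring R] [Semiring A] [Algebra R A] {u a b : A}
    (h : SemiconjBy u a b) (q : R[X]) : SemiconjBy u (aeval a q) (aeval b q) := by
  induction q using Polynomial.induction_on' with
  | add q r hq hr => simpa only [map_add] using hq.add_right hr
  | monomial n r =>
    simpa only [aeval_monomial] using
      (Algebra.commute_algebraMap_right r u).semiconjBy.mul_right (h.pow_right n)

theorem SemiconjBy.cfc_real {𝒜 : Type*} [CStarAlgebra 𝒜] {u a b : 𝒜} (h : SemiconjBy u a b)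
    (ha : IsSelfAdjoint a) (hb : IsSelfAdjoint b) {f : ℝ → ℝ} (hf : Continuous f) :
    SemiconjBy u (cfc f a) (cfc f b) := by
  obtain ⟨r, hr⟩ := ((spectrum.isCompact (𝕜 := ℝ) a).union
    (spectrum.isCompact (𝕜 := ℝ) b)).isBounded.subset_closedBall 0
  rw [Real.closedBall_eq_Icc, zero_sub, zero_add] at hr
  have hq : ∀ n : ℕ, ∃ q : ℝ[X], ∀ x ∈ Set.Icc (-r) r, dist (f x) (q.eval x) < 1 / (n + 1) :=
    fun n ↦ by
      simpa only [Real.dist_eq, abs_sub_comm] using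
        exists_polynomial_near_of_continuousOn (-r) r f hf.continuousOn _ Nat.one_div_pos_of_nat
  choose q hq using hq
  have hconv : TendstoUniformlyOn (fun n x ↦ (q n).eval x) f atTop (Set.Icc (-r) r) := by
    refine Metric.tendstoUniformlyOn_iff.mpr fun ε hε ↦ ?_
    obtain ⟨N, hN⟩ := exists_nat_one_div_lt hε
    filter_upwards [eventually_ge_atTop N] with n hn x hx
    refine (hq n x hx).trans_le (le_trans ?_ hN.le)
    gcongr
  have hlim {c : 𝒜} (hc : spectrum ℝ c ⊆ Set.Icc (-r) r) :
      Tendsto (fun n ↦ cfc (q n).eval c) atTop (𝓝 (cfc f c)) :=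
    tendsto_cfc_fun (hconv.mono hc) (.of_forall fun n ↦ (q n).continuousOn)
  refine tendsto_nhds_unique ((hlim fun x hx ↦ hr (.inl hx)).const_mul u) ?_
  have hpoly (n : ℕ) : u * cfc (q n).eval a = cfc (q n).eval b * u := by
    rw [cfc_polynomial (q n) a ha, cfc_polynomial (q n) b hb]
    exact (h.aeval (q n)).eq
  simp only [hpoly]
  exact (hlim fun x hx ↦ hr (.inr hx)).mul_const u

theorem IsStarNormal.semiconjBy_star_mul {R : Type*} [Semiring R] [StarRing R] {a b : R}
    (ha : IsStarNormal a) (hb : Commute b (a * star a)) :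
    SemiconjBy a (star (b * a)) (star (a * b)) := by
  have hb' : Commute (star b) (a * star a) := by
    simpa only [star_mul, star_star] using hb.star_star
  calc a * star (b * a) = a * star a * star b := by rw [star_mul, mul_assoc]
    _ = star b * (star a * a) := by rw [← hb'.eq, ha.star_comm_self.eq]
    _ = star (a * b) * a := by rw [star_mul, mul_assoc]

section Quasihyponormal

variable {𝒜 : Type*} [CStarAlgebra 𝒜]

noncomputable def quasihyponormalDefect (p : ℝ) (k : ℕ) (T : 𝒜) : 𝒜 :=
  star T ^ k * (cfc (fun x : ℝ => x ^ p) (star T * T) - cfc (fun x : ℝ => x ^ p) (T * star T)) *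
    T ^ k

theorem isSelfAdjoint_quasihyponormalDefect (p : ℝ) (k : ℕ) (T : 𝒜) :
    IsSelfAdjoint (quasihyponormalDefect p k T) := by
  have hD : IsSelfAdjoint
      (cfc (fun x : ℝ => x ^ p) (star T * T) - cfc (fun x : ℝ => x ^ p) (T * star T)) :=
    .sub (cfc_predicate _ _) (cfc_predicate _ _)
  rw [quasihyponormalDefect, ← star_pow]
  exact hD.conjugate' _

theorem SemiconjBy.quasihyponormalDefect {a T S : 𝒜} (h : SemiconjBy a T S)
    (h' : SemiconjBy a (star T) (star S)) {p : ℝ} (hp : 0 ≤ p) (k : ℕ) :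
    SemiconjBy a (quasihyponormalDefect p k T) (quasihyponormalDefect p k S) := by
  have hf : Continuous fun x : ℝ => x ^ p :=
    continuous_iff_continuousAt.mpr fun x ↦ Real.continuousAt_rpow_const x p (.inr hp)
  have hcfc := ((h'.mul_right h).cfc_real (.star_mul_self T) (.star_mul_self S) hf).sub_right
    ((h.mul_right h').cfc_real (.mul_star_self T) (.mul_star_self S) hf)
  exact ((h'.pow_right k).mul_right hcfc).mul_right (h.pow_right k)

theorem Commute.quasihyponormalDefect {c S : 𝒜} (h : Commute c S) (h' : Commute c (star S))
    (p : ℝ) (k : ℕ) : Commute c (quasihyponormalDefect p k S) := by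
  have hcfc := ((h'.mul_right h).symm.cfc_real (fun x : ℝ => x ^ p)).symm.sub_right
    ((h.mul_right h').symm.cfc_real (fun x : ℝ => x ^ p)).symm
  exact ((h'.pow_right k).mul_right hcfc).mul_right (h.pow_right k)

end Quasihyponormal

namespace ContinuousLinearMap

theorem ker_le_ker_mul_pow_mul {𝕜 E : Type*} [NontriviallyNormedField 𝕜] [NormedAddCommGroup E]
    [NormedSpace 𝕜 E] (X B A : E →L[𝕜] E) {k : ℕ} (hk : k ≠ 0) :
    A.ker ≤ (X * (B * A) ^ k).ker := by
  obtain ⟨n, rfl⟩ := Nat.exists_eq_succ_of_ne_zero hk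
  intro z hz
  simp_all [pow_succ]

variable {𝕜 E F : Type*} [RCLike 𝕜] [NormedAddCommGroup E] [InnerProductSpace 𝕜 E]
  [CompleteSpace E] [NormedAddCommGroup F] [InnerProductSpace 𝕜 F] [CompleteSpace F]

theorem isPositive_of_ker_le_of_isPositive_comp_adjoint {M : E →L[𝕜] E} {A : E →L[𝕜] F}
    (hM : M.IsSymmetric) (hker : A.ker ≤ M.ker) (h : (A ∘L M ∘L adjoint A).IsPositive) :
    M.IsPositive := by
  have hrange (y : F) : 0 ≤ M.reApplyInnerSelf (adjoint A y) := by
    simpa only [reApplyInnerSelf, comp_apply, adjoint_inner_right] using h.2 y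
  have hclosed : IsClosed {x | 0 ≤ M.reApplyInnerSelf x} :=
    isClosed_le continuous_const M.reApplyInnerSelf_continuous
  refine ⟨hM, fun x ↦ ?_⟩
  obtain ⟨z, hz, w, hw, rfl⟩ := A.ker.exists_add_mem_mem_orthogonal x
  have hMz : M z = 0 := hker hz
  have hw' : w ∈ closure (Set.range (adjoint A)) := by
    rw [A.orthogonal_ker] at hw
    rwa [← SetLike.mem_coe, Submodule.topologicalClosure_coe, LinearMap.coe_range, coe_coe] at hw
  have : M.reApplyInnerSelf (z + w) = M.reApplyInnerSelf w := by
    rw [reApplyInnerSelf_apply, reApplyInnerSelf_apply, map_add, hMz, zero_add, inner_add_right,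
      hM.apply_clm w z, hMz, inner_zero_right, zero_add]
  rw [this]
  exact hclosed.closure_subset_iff.mpr (Set.range_subset_iff.mpr hrange) hw'

end ContinuousLinearMap

theorem stmt13_general (A B : H →L[ℂ] H) (p : ℝ) (hp0 : 0 < p)
    (k : ℕ) (hk : 0 < k)
    (hA : adjoint A * A = A * adjoint A)
    (hAB : 0 ≤ (adjoint (A * B)) ^ k *
        (cfc (fun x : ℝ => x ^ p) (adjoint (A * B) * (A * B)) -
          cfc (fun x : ℝ => x ^ p) ((A * B) * adjoint (A * B))) * (A * B) ^ k)
    (hcomm : B * (A * adjoint A) = (A * adjoint A) * B) :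
    0 ≤ (adjoint (B * A)) ^ k *
        (cfc (fun x : ℝ => x ^ p) (adjoint (B * A) * (B * A)) -
          cfc (fun x : ℝ => x ^ p) ((B * A) * adjoint (B * A))) * (B * A) ^ k := by
  simp only [← star_eq_adjoint] at hA hAB hcomm ⊢
  change 0 ≤ quasihyponormalDefect p k (A * B) at hAB
  change 0 ≤ quasihyponormalDefect p k (B * A)
  have hnormal : IsStarNormal A := ⟨hA⟩
  have hintertwine : SemiconjBy A (quasihyponormalDefect p k (B * A))
      (quasihyponormalDefect p k (A * B)) :=
    SemiconjBy.quasihyponormalDefect (mul_assoc A B A).symm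
      (hnormal.semiconjBy_star_mul hcomm) hp0.le k
  have hC : Commute (A * star A) (A * B) :=
    ((Commute.refl A).mul_left hnormal.star_comm_self).mul_right
      (hcomm.symm : Commute (A * star A) B)
  have hC' : Commute (A * star A) (star (A * B)) := by
    simpa only [star_mul, star_star] using hC.star_star
  rw [nonneg_iff_isPositive]
  refine isPositive_of_ker_le_of_isPositive_comp_adjoint
    (isSelfAdjoint_quasihyponormalDefect p k _).isSymmetric (ker_le_ker_mul_pow_mul _ _ _ hk.ne')
    ((nonneg_iff_isPositive _).mp ?_)
  calc 0 ≤ quasihyponormalDefect p k (A * B) * (A * star A) :=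
        (hC.quasihyponormalDefect hC' p k).symm.mul_nonneg hAB (mul_star_self_nonneg A)
    _ = A * quasihyponormalDefect p k (B * A) * star A := by rw [hintertwine.eq, mul_assoc]

/-- A normal, AB (p,k)-quasihyponormal, B(AA*) = (AA*)B ⟹ BA is (p,k)-quasihyponormal. -/
theorem stmt13 (A B : H →L[ℂ] H) (p : ℝ) (hp0 : 0 < p) (hp1 : p ≤ 1)
    (k : ℕ) (hk : 0 < k)
    (hA : adjoint A * A = A * adjoint A)
    (hAB : 0 ≤ (adjoint (A * B)) ^ k *
        (cfc (fun x : ℝ => x ^ p) (adjoint (A * B) * (A * B)) -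
          cfc (fun x : ℝ => x ^ p) ((A * B) * adjoint (A * B))) * (A * B) ^ k)
    (hcomm : B * (A * adjoint A) = (A * adjoint A) * B) :
    0 ≤ (adjoint (B * A)) ^ k *
        (cfc (fun x : ℝ => x ^ p) (adjoint (B * A) * (B * A)) -
          cfc (fun x : ℝ => x ^ p) ((B * A) * adjoint (B * A))) * (B * A) ^ k :=
  stmt13_general A B p hp0 k hk hA hAB hcomm
end

section
/- Let A be the unilateral right shift on ℓ²(ℕ) (Ae_n = e_{n+1}) and let B be the orthogonal projection with Be_n = e_n for n ≠ 1 and Be_1 = 0. Then A and B are quasihyponormal, but AB is not quasihyponormal. -/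
open ContinuousLinearMap
open scoped InnerProductSpace

/-! Isometries satisfy `T*T = 1` and self-adjoint operators `T*T = T²`, so both are
quasihyponormal. Conversely, if `T` is quasihyponormal and `T²x = 0` then `T*Tx = 0`, hence
`‖Tx‖² = ⟪x, T*Tx⟫ = 0`: the kernel of `T²` lies in that of `T`. This fails for `AB`, which maps
`e₀ ↦ e₁ ↦ 0`. -/

def IsQuasihyponormal {𝕜 E : Type*} [RCLike 𝕜] [NormedAddCommGroup E] [InnerProductSpace 𝕜 E]
    [CompleteSpace E] (T : E →L[𝕜] E) : Prop :=
  ∀ x, ‖(adjoint T * T) x‖ ≤ ‖(T ^ 2) x‖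

namespace IsQuasihyponormal

variable {𝕜 E : Type*} [RCLike 𝕜] [NormedAddCommGroup E] [InnerProductSpace 𝕜 E] [CompleteSpace E]
  {T : E →L[𝕜] E}

theorem of_norm_map (hT : ∀ x, ‖T x‖ = ‖x‖) : IsQuasihyponormal T := fun x => by
  rw [show adjoint T * T = 1 from (norm_map_iff_adjoint_comp_self T).mp hT, pow_two,
    mul_apply_eq_comp, one_apply_eq_self, hT, hT]

theorem _root_.IsSelfAdjoint.isQuasihyponormal (hT : IsSelfAdjoint T) : IsQuasihyponormal T :=
  fun x => by rw [hT.adjoint_eq, pow_two]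

theorem apply_eq_zero_of_sq_apply_eq_zero (hT : IsQuasihyponormal T) {x : E}
    (hx : (T ^ 2) x = 0) : T x = 0 := by
  have hTT : adjoint T (T x) = 0 := by simpa [hx] using hT x
  rw [← inner_self_eq_zero (𝕜 := 𝕜), ← adjoint_inner_right, hTT, inner_zero_right]

end IsQuasihyponormal

namespace lp

variable {𝕜 ι : Type*} [RCLike 𝕜] [DecidableEq ι]

theorem ext_inner_single {x y : lp (fun _ : ι => 𝕜) 2}
    (h : ∀ i, ⟪lp.single 2 i (1 : 𝕜), x⟫_𝕜 = ⟪lp.single 2 i (1 : 𝕜), y⟫_𝕜) : x = y :=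
  lp.ext <| funext fun i => by simpa [lp.inner_single_left] using h i

theorem continuousLinearMap_ext_single {F : Type*} [TopologicalSpace F] [AddCommMonoid F]
    [Module 𝕜 F] [T2Space F] [ContinuousAdd F] {T S : lp (fun _ : ι => 𝕜) 2 →L[𝕜] F}
    (h : ∀ i, T (lp.single 2 i 1) = S (lp.single 2 i 1)) : T = S := by
  refine ContinuousLinearMap.ext fun x => ?_
  have hx := lp.hasSum_single (E := fun _ : ι => 𝕜) ENNReal.ofNat_ne_top x
  have hsingle : ∀ i, lp.single (E := fun _ : ι => 𝕜) 2 i (x i) = x i • lp.single 2 i 1 :=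
    fun i => by rw [← lp.single_smul, smul_eq_mul, mul_one]
  refine (hx.mapL T).unique ?_
  simpa only [Function.comp_def, hsingle, map_smul, h] using hx.mapL S

theorem continuousLinearMap_ext_inner_single
    {T S : lp (fun _ : ι => 𝕜) 2 →L[𝕜] lp (fun _ : ι => 𝕜) 2}
    (h : ∀ i j, ⟪lp.single 2 i (1 : 𝕜), T (lp.single 2 j 1)⟫_𝕜 =
      ⟪lp.single 2 i (1 : 𝕜), S (lp.single 2 j 1)⟫_𝕜) : T = S :=
  continuousLinearMap_ext_single fun j => ext_inner_single fun i => h i j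

theorem inner_single_one_single_one (i j : ι) :
    ⟪lp.single (E := fun _ : ι => 𝕜) 2 i 1, lp.single 2 j 1⟫_𝕜 = if i = j then 1 else 0 := by
  rw [lp.inner_single_left, lp.single_apply]
  split_ifs <;> simp_all

theorem adjoint_mul_self_eq_one_of_apply_single {f : ι → ι} (hf : f.Injective)
    {A : lp (fun _ : ι => 𝕜) 2 →L[𝕜] lp (fun _ : ι => 𝕜) 2}
    (hA : ∀ i, A (lp.single 2 i 1) = lp.single 2 (f i) 1) : adjoint A * A = 1 := by
  refine continuousLinearMap_ext_inner_single fun i j => ?_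
  rw [mul_apply_eq_comp, adjoint_inner_right, hA, hA, one_apply_eq_self,
    inner_single_one_single_one, inner_single_one_single_one]
  simp only [hf.eq_iff]

theorem isSelfAdjoint_of_apply_single
    {B : lp (fun _ : ι => 𝕜) 2 →L[𝕜] lp (fun _ : ι => 𝕜) 2} (d : ι → ℝ)
    (hB : ∀ i, B (lp.single 2 i 1) = (d i : 𝕜) • lp.single 2 i 1) :
    IsSelfAdjoint B := by
  refine continuousLinearMap_ext_inner_single fun i j => ?_
  rw [star_eq_adjoint, adjoint_inner_right, hB, hB, inner_smul_left, inner_smul_right,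
    inner_single_one_single_one]
  split_ifs with hij
  · simp [hij]
  · simp

end lp

/-- The unilateral shift A and the projection B killing e₁ on ℓ²(ℕ) are quasihyponormal,
but AB is not quasihyponormal. -/
theorem stmt15 (A B : lp (fun _ : ℕ => ℂ) 2 →L[ℂ] lp (fun _ : ℕ => ℂ) 2)
    (hA : ∀ n : ℕ, A (lp.single 2 n 1) = lp.single 2 (n + 1) 1)
    (hB : ∀ n : ℕ, n ≠ 1 → B (lp.single 2 n 1) = lp.single 2 n 1)
    (hB1 : B (lp.single 2 1 1) = 0) :
    (∀ x, ‖(adjoint A * A) x‖ ≤ ‖(A ^ 2) x‖) ∧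
    (∀ x, ‖(adjoint B * B) x‖ ≤ ‖(B ^ 2) x‖) ∧
    ¬ (∀ x, ‖(adjoint (A * B) * (A * B)) x‖ ≤ ‖((A * B) ^ 2) x‖) := by
  have hA_isometry : ∀ x, ‖A x‖ = ‖x‖ := (norm_map_iff_adjoint_comp_self A).mpr
    (lp.adjoint_mul_self_eq_one_of_apply_single (add_left_injective 1) hA)
  have hB_selfAdjoint : IsSelfAdjoint B := by
    refine lp.isSelfAdjoint_of_apply_single (fun n => if n = 1 then 0 else 1) fun n => ?_
    by_cases hn : n = 1
    · simp [hn, hB1]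
    · simp [hn, hB n hn]
  have hAB_e₀ : (A * B) (lp.single 2 0 1) = lp.single 2 1 1 := by
    rw [mul_apply_eq_comp, hB 0 zero_ne_one, hA]
  refine ⟨IsQuasihyponormal.of_norm_map hA_isometry, hB_selfAdjoint.isQuasihyponormal,
    fun hAB => ?_⟩
  have := IsQuasihyponormal.apply_eq_zero_of_sq_apply_eq_zero hAB (x := lp.single 2 0 1)
    (by rw [pow_two, mul_apply_eq_comp, hAB_e₀, mul_apply_eq_comp, hB1, map_zero])
  rw [hAB_e₀] at this
  simpa using congrArg (· 1) this
end
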